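/- For a unit vector $n\in\mathbb{R}^3$ and a real $3\times 3$ matrix $D$, define $\mathrm{div}(D)=\mathrm{tr}\,D$, let $c(D)\in\mathbb{R}^3$ be the axial vector with components $c(D)_i=\varepsilon_{ijk}D_{kj}$ (so that $c(\nabla n)=\mathrm{curl}\,n$), and set $W(n,D)=K_1(\mathrm{tr}\,D)^2+K_2(n\cdot c(D))^2+K_3|n\times c(D)|^2+(K_2+K_4)(\mathrm{tr}(D^2)-(\mathrm{tr}\,D)^2)$. If the Ericksen inequalities $2K_1>K_2+K_4$, $K_2>|K_4|$, $K_3>0$ hold, then there exist constants $C'>0$ and $C>0$ such that $C'|D|^2\le W(n,D)$ for all unit vectors $n$ and all $D$ satisfying $D^Tn=0$, and $W(n,D)\le C|D|^2$ for all unit vectors $n$ and all $D$. -/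

import Mathlib

/-!
Under `Dᵀ n = 0` and `|n| = 1` the squared norm splits into splay `S = tr D`, twist
`T = n ⬝ c(D)`, bend `B = n × c(D)` and biaxial splay `Δ` as `|D|² = S²/2 + T²/2 + |B|² + |Δ|²`,
while `W = (2K₁ - K₂ - K₄) S²/2 + (K₂ - K₄) T²/2 + K₃ |B|² + (K₂ + K₄) |Δ|²`. The Ericksen
inequalities say exactly that these four weights are positive, and their minimum is a
coercivity constant. The upper bound needs no constraint: Cauchy–Schwarz, `|tr D²| ≤ |D|²` and
Lagrange's identity bound each term of `W` by a multiple of `|D|²`.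
-/

open Matrix

/-- The axial vector `c(D)` of a `3×3` matrix, with components `c(D)ᵢ = ε_{ijk} D_{kj}`,
so that `c(∇n) = curl n`. -/
def axialVec (D : Matrix (Fin 3) (Fin 3) ℝ) : Fin 3 → ℝ :=
  ![D 2 1 - D 1 2, D 0 2 - D 2 0, D 1 0 - D 0 1]

/-- The Oseen–Frank energy density (case `q₀ = 0`) evaluated at director `n` and
director gradient `D`. -/
def oseenFrank (K₁ K₂ K₃ K₄ : ℝ) (n : Fin 3 → ℝ) (D : Matrix (Fin 3) (Fin 3) ℝ) : ℝ :=
  K₁ * D.trace ^ 2 + K₂ * (n ⬝ᵥ axialVec D) ^ 2 +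
    K₃ * ((n ⨯₃ axialVec D) ⬝ᵥ (n ⨯₃ axialVec D)) +
    (K₂ + K₄) * ((D * D).trace - D.trace ^ 2)

theorem dotProduct_self_nonneg {ι R : Type*} [Fintype ι] [Ring R] [LinearOrder R]
    [IsStrictOrderedRing R] (v : ι → R) : 0 ≤ v ⬝ᵥ v :=
  Finset.sum_nonneg fun i _ => mul_self_nonneg (v i)

theorem mul_le_abs_mul_of_abs_le {R : Type*} [Ring R] [LinearOrder R] [IsStrictOrderedRing R]
    {K x X : R} (h : |x| ≤ X) : K * x ≤ |K| * X :=
  (le_abs_self _).trans (abs_mul K x ▸ mul_le_mul_of_nonneg_left h (abs_nonneg K))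

section Frobenius

variable {ι : Type*} [Fintype ι] (D : Matrix ι ι ℝ)

theorem sum_sum_add_transpose_sq :
    ∑ i, ∑ j, (D i j + D j i) ^ 2 = 2 * (∑ i, ∑ j, D i j ^ 2 + (D * D).trace) := by
  simp only [add_sq, mul_assoc, Finset.sum_add_distrib, ← Finset.mul_sum, trace, diag, mul_apply]
  rw [Finset.sum_comm (f := fun i j => D j i ^ 2)]
  ring

theorem sum_sum_sub_transpose_sq :
    ∑ i, ∑ j, (D i j - D j i) ^ 2 = 2 * (∑ i, ∑ j, D i j ^ 2 - (D * D).trace) := by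
  simp only [sub_sq, mul_assoc, Finset.sum_add_distrib, Finset.sum_sub_distrib,
    ← Finset.mul_sum, trace, diag, mul_apply]
  rw [Finset.sum_comm (f := fun i j => D j i ^ 2)]
  ring

theorem abs_trace_mul_self_le_sum_sq : |(D * D).trace| ≤ ∑ i, ∑ j, D i j ^ 2 := by
  have hadd := sum_sum_add_transpose_sq D
  have hsub := sum_sum_sub_transpose_sq D
  have : 0 ≤ ∑ i, ∑ j, (D i j + D j i) ^ 2 := by positivity
  have : 0 ≤ ∑ i, ∑ j, (D i j - D j i) ^ 2 := by positivity
  exact abs_le.2 ⟨by linarith, by linarith⟩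

theorem sq_trace_le_card_mul_sum_sq :
    D.trace ^ 2 ≤ Fintype.card ι * ∑ i, ∑ j, D i j ^ 2 := by
  calc D.trace ^ 2 ≤ Fintype.card ι * ∑ i, D i i ^ 2 := sq_sum_le_card_mul_sum_sq
    _ ≤ Fintype.card ι * ∑ i, ∑ j, D i j ^ 2 := by
      gcongr with i
      exact Finset.single_le_sum (f := fun j => D i j ^ 2) (fun _ _ => sq_nonneg _)
        (Finset.mem_univ i)

end Frobenius

theorem sq_dotProduct_add_cross_dotProduct_cross {R : Type*} [CommRing R] {n : Fin 3 → R}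
    (hn : n ⬝ᵥ n = 1) (c : Fin 3 → R) :
    (n ⬝ᵥ c) ^ 2 + n ⨯₃ c ⬝ᵥ n ⨯₃ c = c ⬝ᵥ c := by
  rw [cross_dot_cross, hn, dotProduct_comm c n]
  ring

theorem sum_sq_eq_axialVec_dotProduct_add_trace (D : Matrix (Fin 3) (Fin 3) ℝ) :
    ∑ i, ∑ j, D i j ^ 2 = axialVec D ⬝ᵥ axialVec D + (D * D).trace := by
  simp only [axialVec, dotProduct, trace, diag, mul_apply, Fin.sum_univ_three, cons_val_zero,
    cons_val_one, cons_val]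
  ring

/-- For `|n| = 1` and `Dᵀ n = 0` this is the symmetric traceless part of `D` on the plane `n⊥`,
the biaxial splay `Δ` of Selinger's splay–twist–bend decomposition of `∇n`. -/
noncomputable def biaxialSplay (n : Fin 3 → ℝ) (D : Matrix (Fin 3) (Fin 3) ℝ) :
    Matrix (Fin 3) (Fin 3) ℝ :=
  (2 : ℝ)⁻¹ • (D + Dᵀ - vecMulVec (D *ᵥ n) n - vecMulVec n (D *ᵥ n)) -
    (D.trace / 2) • (1 - vecMulVec n n)

section Constrained

variable {n : Fin 3 → ℝ} {D : Matrix (Fin 3) (Fin 3) ℝ}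

theorem sum_sq_biaxialSplay (hn : n ⬝ᵥ n = 1) (hD : Dᵀ *ᵥ n = 0) :
    ∑ i, ∑ j, biaxialSplay n D i j ^ 2 =
      (2 * (D * D).trace - D.trace ^ 2 + (n ⬝ᵥ axialVec D) ^ 2) / 2 := by
  have hu : Dᵀ *ᵥ n ⬝ᵥ ((n ⬝ᵥ D *ᵥ n) • n + (2 * D.trace * (2 - n ⬝ᵥ n)) • n - (4 : ℝ) • D *ᵥ n
      + Dᵀ *ᵥ n) = 0 := by
    simp [hD]
  linear_combination (norm := skip)
    (D *ᵥ n ⬝ᵥ D *ᵥ n + D.trace ^ 2 * (n ⬝ᵥ n - 1) / 2 - ∑ i, ∑ j, D i j ^ 2 + (D * D).trace) / 2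
      * hn + hu / 2
  simp only [biaxialSplay, axialVec, dotProduct, mulVec, trace, diag, Matrix.mul_apply,
    Fin.sum_univ_three, transpose_apply, Matrix.sub_apply, Matrix.add_apply, Matrix.smul_apply,
    vecMulVec_apply, Matrix.one_apply, Pi.add_apply, Pi.sub_apply, Pi.smul_apply, smul_eq_mul,
    cons_val_zero, cons_val_one, cons_val, Fin.reduceEq, ↓reduceIte]
  ring

theorem sum_sq_eq_splay_twist_bend_biaxialSplay (hn : n ⬝ᵥ n = 1) (hD : Dᵀ *ᵥ n = 0) :
    ∑ i, ∑ j, D i j ^ 2 =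
      D.trace ^ 2 / 2 + (n ⬝ᵥ axialVec D) ^ 2 / 2 + n ⨯₃ axialVec D ⬝ᵥ n ⨯₃ axialVec D +
        ∑ i, ∑ j, biaxialSplay n D i j ^ 2 := by
  rw [sum_sq_biaxialSplay hn hD, sum_sq_eq_axialVec_dotProduct_add_trace,
    ← sq_dotProduct_add_cross_dotProduct_cross hn]
  ring

theorem oseenFrank_eq_splay_twist_bend_biaxialSplay (K₁ K₂ K₃ K₄ : ℝ) (hn : n ⬝ᵥ n = 1)
    (hD : Dᵀ *ᵥ n = 0) :
    oseenFrank K₁ K₂ K₃ K₄ n D =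
      (2 * K₁ - (K₂ + K₄)) * (D.trace ^ 2 / 2) + (K₂ - K₄) * ((n ⬝ᵥ axialVec D) ^ 2 / 2) +
        K₃ * (n ⨯₃ axialVec D ⬝ᵥ n ⨯₃ axialVec D) +
        (K₂ + K₄) * ∑ i, ∑ j, biaxialSplay n D i j ^ 2 := by
  rw [oseenFrank, sum_sq_biaxialSplay hn hD]
  ring

theorem mul_sum_sq_le_oseenFrank {K₁ K₂ K₃ K₄ c : ℝ} (hc₁ : c ≤ 2 * K₁ - (K₂ + K₄))
    (hc₂ : c ≤ K₂ - K₄) (hc₃ : c ≤ K₃) (hc₄ : c ≤ K₂ + K₄) (hn : n ⬝ᵥ n = 1)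
    (hD : Dᵀ *ᵥ n = 0) :
    c * ∑ i, ∑ j, D i j ^ 2 ≤ oseenFrank K₁ K₂ K₃ K₄ n D := by
  rw [sum_sq_eq_splay_twist_bend_biaxialSplay hn hD,
    oseenFrank_eq_splay_twist_bend_biaxialSplay K₁ K₂ K₃ K₄ hn hD]
  have hbend : 0 ≤ n ⨯₃ axialVec D ⬝ᵥ n ⨯₃ axialVec D := dotProduct_self_nonneg _
  have hbiax : 0 ≤ ∑ i, ∑ j, biaxialSplay n D i j ^ 2 := by positivity
  have := mul_le_mul_of_nonneg_right hc₁ (by positivity : 0 ≤ D.trace ^ 2 / 2)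
  have := mul_le_mul_of_nonneg_right hc₂ (by positivity : 0 ≤ (n ⬝ᵥ axialVec D) ^ 2 / 2)
  have := mul_le_mul_of_nonneg_right hc₃ hbend
  have := mul_le_mul_of_nonneg_right hc₄ hbiax
  linarith

end Constrained

theorem oseenFrank_le (K₁ K₂ K₃ K₄ : ℝ) {n : Fin 3 → ℝ} (hn : n ⬝ᵥ n = 1)
    (D : Matrix (Fin 3) (Fin 3) ℝ) :
    oseenFrank K₁ K₂ K₃ K₄ n D ≤
      (3 * |K₁| + 2 * |K₂| + 2 * |K₃| + 4 * |K₂ + K₄|) * ∑ i, ∑ j, D i j ^ 2 := by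
  set N := ∑ i, ∑ j, D i j ^ 2
  set c := axialVec D
  have htr : |(D * D).trace| ≤ N := abs_trace_mul_self_le_sum_sq D
  have hsplay : D.trace ^ 2 ≤ 3 * N := by
    simpa using sq_trace_le_card_mul_sum_sq D
  have hcurl : c ⬝ᵥ c ≤ 2 * N := by
    linarith [sum_sq_eq_axialVec_dotProduct_add_trace D, neg_abs_le (D * D).trace]
  have hlagrange := sq_dotProduct_add_cross_dotProduct_cross hn c
  have htwist : (n ⬝ᵥ c) ^ 2 ≤ 2 * N := by linarith [dotProduct_self_nonneg (n ⨯₃ c)]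
  have hbend : n ⨯₃ c ⬝ᵥ n ⨯₃ c ≤ 2 * N := by linarith [sq_nonneg (n ⬝ᵥ c)]
  have hsaddle : |(D * D).trace - D.trace ^ 2| ≤ 4 * N :=
    (abs_sub _ _).trans (by rw [abs_sq]; linarith)
  have := mul_le_abs_mul_of_abs_le (K := K₁) ((abs_sq D.trace).trans_le hsplay)
  have := mul_le_abs_mul_of_abs_le (K := K₂) ((abs_sq (n ⬝ᵥ c)).trans_le htwist)
  have := mul_le_abs_mul_of_abs_le (K := K₃)
    ((abs_of_nonneg (dotProduct_self_nonneg (n ⨯₃ c))).trans_le hbend)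
  have := mul_le_abs_mul_of_abs_le (K := K₂ + K₄) hsaddle
  rw [oseenFrank]
  linarith

theorem ericksen_inequalities_coercivity (K₁ K₂ K₃ K₄ : ℝ)
    (h1 : K₂ + K₄ < 2 * K₁) (h2 : |K₄| < K₂) (h3 : 0 < K₃) :
    ∃ C' > (0:ℝ), ∃ C > (0:ℝ),
      (∀ (n : Fin 3 → ℝ) (D : Matrix (Fin 3) (Fin 3) ℝ), n ⬝ᵥ n = 1 →
        Dᵀ.mulVec n = 0 →
        C' * ∑ i : Fin 3, ∑ j : Fin 3, (D i j) ^ 2 ≤ oseenFrank K₁ K₂ K₃ K₄ n D) ∧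
      (∀ (n : Fin 3 → ℝ) (D : Matrix (Fin 3) (Fin 3) ℝ), n ⬝ᵥ n = 1 →
        oseenFrank K₁ K₂ K₃ K₄ n D ≤ C * ∑ i : Fin 3, ∑ j : Fin 3, (D i j) ^ 2) := by
  obtain ⟨hK₄, hK₄'⟩ := abs_lt.mp h2
  refine ⟨min (min (2 * K₁ - (K₂ + K₄)) (K₂ - K₄)) (min K₃ (K₂ + K₄)),
    lt_min (lt_min (by linarith) (by linarith)) (lt_min h3 (by linarith)),
    3 * |K₁| + 2 * |K₂| + 2 * |K₃| + 4 * |K₂ + K₄|,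
    by linarith [abs_nonneg K₁, abs_nonneg K₂, abs_nonneg (K₂ + K₄), abs_pos.2 h3.ne'],
    fun n D hn hD => mul_sum_sq_le_oseenFrank ?_ ?_ ?_ ?_ hn hD,
    fun n D hn => oseenFrank_le K₁ K₂ K₃ K₄ hn D⟩
  · exact (min_le_left _ _).trans (min_le_left _ _)
  · exact (min_le_left _ _).trans (min_le_right _ _)
  · exact (min_le_right _ _).trans (min_le_left _ _)
  · exact (min_le_right _ _).trans (min_le_right _ _)
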